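/- arXiv:2503.20470 — 2 statements merged into one kernel-verified Lean document; each statement's English description precedes it below -/
import Mathlib

section
/- Let M be a well-founded ω-model of set theory satisfying 'every regular relation has a collapsing function' (axiom Beta). Then for every linear order α coded by a real in M, if M satisfies 'α is well-founded' then α is genuinely well-founded. -/
open FirstOrder Language

namespace BetaRank

abbrev ZFS : Type 1 := ZFSet.{0}
abbrev Ord0 : Type 1 := Ordinal.{0}

abbrev Sent : Type := Language.graph.Sentence
abbrev Fml (n : ℕ) : Type := Language.graph.Formula (Fin n)

/-- The ∈-structure on a class (set) of ZF sets. -/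
def structC (A : Set ZFS) : Language.graph.Structure ↥A where
  RelMap | .adj => fun x => (x 0).1 ∈ (x 1).1

/-- Satisfaction of a sentence in a class of ZF sets with the true membership relation. -/
def SatC (A : Set ZFS) (σ : Sent) : Prop :=
  @Sentence.Realize Language.graph ↥A (structC A) σ

/-- Satisfaction of a theory. -/
def SatT (A : Set ZFS) (T : Set Sent) : Prop := ∀ σ ∈ T, SatC A σ

/-- The complete first-order theory of a class of ZF sets. -/
def ThC (A : Set ZFS) : Set Sent := { σ | SatC A σ }

/-- Realization of a formula with free variables in a class of ZF sets. -/
def FRealize (A : Set ZFS) {n : ℕ} (φ : Fml n) (v : Fin n → ↥A) : Prop :=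
  @Formula.Realize Language.graph ↥A (structC A) _ φ v

/-- Realization of a bounded formula (all variables among the `n` bound slots). -/
def BRealize (A : Set ZFS) {n : ℕ} (φ : Language.graph.BoundedFormula Empty n)
    (xs : Fin n → ↥A) : Prop :=
  @BoundedFormula.Realize Language.graph ↥A (structC A) _ _ φ Empty.elim xs

/-- Satisfaction over (the members of) a single ZF set with the true membership relation. -/
def SatZ (M : ZFS) (σ : Sent) : Prop := SatC M.toSet σ

def SatZT (M : ZFS) (T : Set Sent) : Prop := ∀ σ ∈ T, SatZ M σ

/-- A transitive (set) model of a theory: the formal rendering of a β-model of set theory. -/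
def TransModel (M : ZFS) (T : Set Sent) : Prop := M.IsTransitive ∧ SatZT M T

/-- The first-order definable subsets (with parameters) of a class of ZF sets. -/
def defSub (A : Set ZFS) : Set ZFS :=
  { y | (∀ z ∈ y, z ∈ A) ∧ ∃ (k : ℕ) (φ : Fml (k + 1)) (p : Fin k → ↥A),
      ∀ z : ZFS, z ∈ y ↔ ∃ h : z ∈ A, FRealize A φ (Fin.cons ⟨z, h⟩ p) }

/-- The constructible hierarchy, as classes of ZF sets. -/
noncomputable def Lv (α : Ord0) : Set ZFS :=
  Ordinal.limitRecOn α ∅ (fun _ ih => defSub ih)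
    (fun o _ ih => { x | ∃ β, ∃ h : β < o, x ∈ ih β h })

/-- The class L of constructible sets. -/
noncomputable def Lclass : Set ZFS := { x | ∃ α, x ∈ Lv α }

/-- `A` is a fully elementary subclass of `B` (with respect to ∈). -/
def ElemIn (A B : Set ZFS) : Prop :=
  A ⊆ B ∧ ∀ (n : ℕ) (φ : Fml n) (v : Fin n → ZFS) (hA : ∀ i, v i ∈ A) (hB : ∀ i, v i ∈ B),
    FRealize A φ (fun i => ⟨v i, hA i⟩) ↔ FRealize B φ (fun i => ⟨v i, hB i⟩)

/-- `σ̂(α)`: the least `σ` with `L_σ ≺ L_α`. -/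
noncomputable def sigmaHat (α : Ord0) : Ord0 := sInf { σ | ElemIn (Lv σ) (Lv α) }

/-- Δ₀ (bounded) formulas in the language of set theory. -/
inductive IsDelta0 : ∀ {α : Type} {n : ℕ}, Language.graph.BoundedFormula α n → Prop
  | falsum {α n} : IsDelta0 (BoundedFormula.falsum : Language.graph.BoundedFormula α n)
  | equal {α n} (t u : Language.graph.Term (α ⊕ Fin n)) : IsDelta0 (Term.bdEqual t u)
  | rel {α n l} (R : Language.graph.Relations l)
      (ts : Fin l → Language.graph.Term (α ⊕ Fin n)) : IsDelta0 (BoundedFormula.rel R ts)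
  | imp {α n} {φ ψ : Language.graph.BoundedFormula α n} :
      IsDelta0 φ → IsDelta0 ψ → IsDelta0 (φ.imp ψ)
  | ball {α n} (t : Language.graph.Term (α ⊕ Fin n))
      {φ : Language.graph.BoundedFormula α (n + 1)} : IsDelta0 φ →
      IsDelta0 ((BoundedFormula.imp
        (Language.adj.boundedFormula₂ (Term.var (Sum.inr (Fin.last n))) (t.liftAt 1 n)) φ).all)

/-- Σ₁ formulas: existential quantifiers in front of a Δ₀ matrix. -/
inductive IsSigma1 : ∀ {α : Type} {n : ℕ}, Language.graph.BoundedFormula α n → Prop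
  | of_delta0 {α n} {φ : Language.graph.BoundedFormula α n} : IsDelta0 φ → IsSigma1 φ
  | ex {α n} {φ : Language.graph.BoundedFormula α (n + 1)} : IsSigma1 φ → IsSigma1 φ.ex

/-- Δ₀-collection holds in the class `A`. -/
def Delta0Collection (A : Set ZFS) : Prop :=
  ∀ (n : ℕ) (φ : Language.graph.BoundedFormula Empty (n + 2)), IsDelta0 φ →
    ∀ (p : Fin n → ↥A) (a : ↥A),
      (∀ x : ↥A, x.1 ∈ a.1 → ∃ y : ↥A, BRealize A φ (Fin.snoc (Fin.snoc p x) y)) →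
      ∃ b : ↥A, ∀ x : ↥A, x.1 ∈ a.1 →
        ∃ y : ↥A, y.1 ∈ b.1 ∧ BRealize A φ (Fin.snoc (Fin.snoc p x) y)

/-- Full first-order collection holds in the class `A`. -/
def FullCollection (A : Set ZFS) : Prop :=
  ∀ (n : ℕ) (φ : Language.graph.BoundedFormula Empty (n + 2)),
    ∀ (p : Fin n → ↥A) (a : ↥A),
      (∀ x : ↥A, x.1 ∈ a.1 → ∃ y : ↥A, BRealize A φ (Fin.snoc (Fin.snoc p x) y)) →
      ∃ b : ↥A, ∀ x : ↥A, x.1 ∈ a.1 →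
        ∃ y : ↥A, y.1 ∈ b.1 ∧ BRealize A φ (Fin.snoc (Fin.snoc p x) y)

/-- An ordinal is admissible iff it is a limit and `L_α` satisfies Δ₀-collection. -/
def AdmissibleOrd (α : Ord0) : Prop := Order.IsSuccLimit α ∧ Delta0Collection (Lv α)

/-- `ξ` is a limit of admissible ordinals. -/
def LimitOfAdmissibles (ξ : Ord0) : Prop :=
  0 < ξ ∧ ∀ γ < ξ, ∃ δ, γ < δ ∧ δ < ξ ∧ AdmissibleOrd δ

/-- `ξ` is locally countable: `L_ξ` satisfies "every set is countable". -/
def LocCtbl (ξ : Ord0) : Prop :=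
  ∀ x ∈ Lv ξ, ∃ f ∈ Lv ξ, ZFSet.IsFunc x ZFSet.omega f ∧
    ∀ z w u : ZFS, z.pair u ∈ f → w.pair u ∈ f → z = w

/-- Every element of `A` is definable in `(A, ∈)` without parameters. -/
def PointwiseDefinable (A : Set ZFS) : Prop :=
  ∀ x : ↥A, ∃ φ : Fml 1, ∀ y : ↥A, FRealize A φ ![y] ↔ y = x

/-- A set is (like) a von Neumann ordinal. -/
def IsVN (x : ZFS) : Prop := x.IsOrdinal

/-- The von Neumann natural numbers as ZF sets. -/
def numZF : ℕ → ZFS := fun n => Nat.rec ∅ (fun _ ih => insert ih ih) n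

/-- f is a set of ordered pairs which is single-valued. -/
def IsFunLike (f : ZFS) : Prop :=
  (∀ p ∈ f, ∃ x y : ZFS, p = x.pair y) ∧
    ∀ x y₁ y₂ : ZFS, x.pair y₁ ∈ f → x.pair y₂ ∈ f → y₁ = y₂

/-- `x` is in the field of the relation `r`. -/
def InFld (r x : ZFS) : Prop := ∃ y : ZFS, x.pair y ∈ r ∨ y.pair x ∈ r

/-- `f` is the Mostowski collapsing function of the relation `r`:
`dom f = field r` and `f(x) = { f(y) : (y,x) ∈ r }`. -/
def IsCollapsing (f r : ZFS) : Prop :=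
  IsFunLike f ∧ (∀ x : ZFS, (∃ y, x.pair y ∈ f) ↔ InFld r x) ∧
    ∀ x v : ZFS, x.pair v ∈ f → ∀ b : ZFS, b ∈ v ↔ ∃ y : ZFS, y.pair x ∈ r ∧ y.pair b ∈ f

/-- `r` is a regular relation from the point of view of `M`:
every nonempty set in `M` has an `r`-minimal element. -/
def RegularIn (M r : ZFS) : Prop :=
  ∀ u ∈ M, u ≠ ∅ → ∃ x ∈ u, ∀ y ∈ u, y.pair x ∉ r

/-- The axiom Beta holds in `M`: every regular relation in `M` has a collapsing function in `M`. -/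
def BetaIn (M : ZFS) : Prop := ∀ r ∈ M, RegularIn M r → ∃ f ∈ M, IsCollapsing f r

/-- An `L_∈`-structure coded by a pair of ZF sets (domain, membership relation). -/
def structP (m e : ZFS) : Language.graph.Structure ↥m.toSet where
  RelMap | .adj => fun x => ZFSet.pair (x 0).1 (x 1).1 ∈ e

def SatP (m e : ZFS) (T : Set Sent) : Prop :=
  ∀ σ ∈ T, @Sentence.Realize Language.graph ↥m.toSet (structP m e) σ

/-- The pair `(m, e)` is a well-founded `L_∈`-structure. -/
def WFPair (m e : ZFS) : Prop :=
  (∀ p ∈ e, ∃ x ∈ m, ∃ y ∈ m, p = x.pair y) ∧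
    WellFounded (fun x y : ↥m.toSet => ZFSet.pair x.1 y.1 ∈ e)

/-- A well-founded coded model of the theory `T`. -/
def WFModelP (m e : ZFS) (T : Set Sent) : Prop := WFPair m e ∧ SatP m e T

/-! Internal well-foundedness of `α` makes `α` regular in `M`, so Beta provides a collapsing
function `f ∈ M`. Its values are genuine sets and `(y, x) ∈ α` forces `f y ∈ f x`, so
∈-induction on `f x` shows that every point of the field of `α` is `α`-accessible; points
outside the field have no `α`-predecessors at all. -/

lemma regularIn_of_minimal_of_subset_field {M r : ZFS}
    (h : ∀ u ∈ M, u ≠ ∅ → (∀ x ∈ u, InFld r x) → ∃ x ∈ u, ∀ y ∈ u, y.pair x ∉ r) :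
    RegularIn M r := by
  intro u hu hne
  by_cases hfld : ∀ x ∈ u, InFld r x
  · exact h u hu hne hfld
  · obtain ⟨x, hxu, hx⟩ := not_forall₂.mp hfld
    exact ⟨x, hxu, fun y _ hyx => hx ⟨y, Or.inr hyx⟩⟩

namespace IsCollapsing

variable {f r : ZFS}

lemma acc_of_pair_mem (hf : IsCollapsing f r) (v : ZFS) :
    ∀ x : ZFS, x.pair v ∈ f → Acc (fun a b : ZFS => a.pair b ∈ r) x := by
  obtain ⟨-, hdom, hval⟩ := hf
  induction v using ZFSet.inductionOn with
  | _ v ih =>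
    intro x hxv
    refine Acc.intro x fun y hyx => ?_
    obtain ⟨w, hyw⟩ := (hdom y).2 ⟨x, Or.inl hyx⟩
    have hwv : w ∈ v := (hval x v hxv w).2 ⟨y, hyx, hyw⟩
    exact ih w hwv y hyw

lemma wellFounded (hf : IsCollapsing f r) : WellFounded fun a b : ZFS => a.pair b ∈ r := by
  refine ⟨fun x => ?_⟩
  by_cases hx : InFld r x
  · obtain ⟨v, hxv⟩ := (hf.2.1 x).2 hx
    exact hf.acc_of_pair_mem v x hxv
  · exact Acc.intro x fun y hyx => absurd ⟨y, Or.inr hyx⟩ hx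

end IsCollapsing

theorem wellFounded_of_internal_wellFounded_of_beta_general (M : ZFS)
    (hbeta : BetaIn M)
    (α : ZFS) (hαM : α ∈ M)
    -- M satisfies "α is well-founded": every nonempty set in M of field elements has
    -- an α-minimal element:
    (hwfM : ∀ u ∈ M, u ≠ ∅ → (∀ x ∈ u, InFld α x) → ∃ x ∈ u, ∀ y ∈ u, y.pair x ∉ α) :
    WellFounded fun a b : ZFS => a.pair b ∈ α := by
  obtain ⟨f, -, hf⟩ := hbeta α hαM (regularIn_of_minimal_of_subset_field hwfM)
  exact hf.wellFounded

/-- Let `M` be a well-founded (rendered: transitive) ω-model of set theory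
satisfying the axiom Beta.  Then for every linear order `α` coded by a real in `M`, if `M`
satisfies "`α` is well-founded" then `α` is genuinely well-founded. -/
theorem wellFounded_of_internal_wellFounded_of_beta (M : ZFS)
    (htrans : M.IsTransitive) (homega : ZFSet.omega ∈ M) (hbeta : BetaIn M)
    (α : ZFS) (hαM : α ∈ M)
    -- α is a relation on (a subset of) ω, i.e. it is coded by a real:
    (hreal : ∀ p ∈ α, ∃ m ∈ ZFSet.omega, ∃ n ∈ ZFSet.omega, p = ZFSet.pair m n)
    -- α is a (strict) linear order:
    (htr : ∀ a b c : ZFS, a.pair b ∈ α → b.pair c ∈ α → a.pair c ∈ α)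
    (hirr : ∀ a : ZFS, a.pair a ∉ α)
    (htot : ∀ a b : ZFS, InFld α a → InFld α b → a = b ∨ a.pair b ∈ α ∨ b.pair a ∈ α)
    -- M satisfies "α is well-founded": every nonempty set in M of field elements has
    -- an α-minimal element:
    (hwfM : ∀ u ∈ M, u ≠ ∅ → (∀ x ∈ u, InFld α x) → ∃ x ∈ u, ∀ y ∈ u, y.pair x ∉ α) :
    WellFounded fun a b : ZFS => a.pair b ∈ α :=
  wellFounded_of_internal_wellFounded_of_beta_general M hbeta α hαM hwfM

end BetaRank
end

section
/- If α and β are distinct ordinals such that every element of L_α is definable without parameters in L_α and every element of L_β is definable without parameters in L_β, then Th(L_α) ≠ Th(L_β). -/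
open FirstOrder Language

namespace FirstOrder.Language

variable {L : Language} {M N : Type*} [L.Structure M] [L.Structure N]

variable (L M) in
def IsPointwiseDefinable : Prop :=
  ∀ x : M, ∃ φ : L.Formula (Fin 1), ∀ y : M, φ.Realize ![y] ↔ y = x

namespace ElementarilyEquivalent

theorem forall_realize_iff (h : M ≅[L] N) {α : Type*} [Finite α] (φ : L.Formula α) :
    (∀ v : α → M, φ.Realize v) ↔ ∀ v : α → N, φ.Realize v := by
  simpa [Sentence.Realize] using h.realize_sentence ((φ.relabel Sum.inr).iAlls α)

theorem exists_realize_fin_one_iff (h : M ≅[L] N) (φ : L.Formula (Fin 1)) :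
    (∃ x : M, φ.Realize ![x]) ↔ ∃ y : N, φ.Realize ![y] := by
  have := h.realize_sentence ((φ.relabel Sum.inr).iExs (Fin 1))
  simp only [Sentence.Realize, Formula.realize_iExs, Formula.realize_relabel,
    Fin.exists_fin_succ_pi, Fin.exists_fin_zero_pi] at this
  exact this

theorem realize_of_realize_of_defines (h : M ≅[L] N) {n : ℕ} {φ : Fin n → L.Formula (Fin 1)}
    {xs : Fin n → M} (hφ : ∀ i y, (φ i).Realize ![y] ↔ y = xs i) {ψ : L.Formula (Fin n)}
    (hψ : ψ.Realize xs) {ys : Fin n → N} (hys : ∀ i, (φ i).Realize ![ys i]) : ψ.Realize ys := by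
  let χ : L.Formula (Fin n) := (Formula.iInf fun i => (φ i).relabel fun _ => i).imp ψ
  have hM (v : Fin n → M) : χ.Realize v := by
    simp only [χ, Formula.realize_imp, Formula.realize_iInf, Formula.realize_relabel,
      Function.comp_def, Matrix.cons_val_fin_one, Matrix.const_fin1_eq]
    intro hv
    rwa [show v = xs from funext fun i => (hφ i (v i)).1 (hv i)]
  have hN := (h.forall_realize_iff χ).1 hM ys
  simp only [χ, Formula.realize_imp, Formula.realize_iInf, Formula.realize_relabel,
    Function.comp_def, Matrix.cons_val_fin_one, Matrix.const_fin1_eq] at hN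
  exact hN hys

end ElementarilyEquivalent

namespace IsPointwiseDefinable

theorem nonempty_elementaryEmbedding (hM : L.IsPointwiseDefinable M) (h : M ≅[L] N) :
    Nonempty (M ↪ₑ[L] N) := by
  choose φ hφ using hM
  have hex (x : M) : ∃ y : N, (φ x).Realize ![y] :=
    (h.exists_realize_fin_one_iff (φ x)).1 ⟨x, (hφ x x).2 rfl⟩
  choose f hf using hex
  refine ⟨⟨f, fun n ψ xs => ⟨fun hψ => ?_, fun hψ => ?_⟩⟩⟩
  · by_contra hnψ
    exact (h.realize_of_realize_of_defines (fun i => hφ (xs i)) (ψ := ψ.not) hnψ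
      fun i => hf (xs i)) hψ
  · exact h.realize_of_realize_of_defines (fun i => hφ (xs i)) hψ fun i => hf (xs i)

theorem surjective_elementaryEmbedding (hN : L.IsPointwiseDefinable N) (f : M ↪ₑ[L] N) :
    Function.Surjective f := by
  intro y
  obtain ⟨ψ, hψ⟩ := hN y
  obtain ⟨x, hx⟩ := (f.elementarilyEquivalent.exists_realize_fin_one_iff ψ).2 ⟨y, (hψ y).2 rfl⟩
  refine ⟨x, (hψ (f x)).1 ?_⟩
  rw [← f.map_formula] at hx
  simpa only [Function.comp_def, Matrix.cons_val_fin_one, Matrix.const_fin1_eq] using hx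

end IsPointwiseDefinable

end FirstOrder.Language

namespace ZFSet

def IsTransitiveClass (A : Set ZFSet) : Prop := ∀ x ∈ A, ∀ z ∈ x, z ∈ A

theorem eq_of_surjective_of_mem_iff {A B : Set ZFSet} (hA : IsTransitiveClass A)
    (hB : IsTransitiveClass B) (f : A → B) (hf : Function.Surjective f)
    (hmem : ∀ x y : A, (f x).1 ∈ (f y).1 ↔ x.1 ∈ y.1) : A = B := by
  have hfix (x : ZFSet) (hx : x ∈ A) : (f ⟨x, hx⟩).1 = x := by
    induction x using inductionOn with
    | _ x ih =>
      ext z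
      constructor
      · intro hz
        obtain ⟨w, hw⟩ := hf ⟨z, hB _ (f ⟨x, hx⟩).2 z hz⟩
        have hwx : w.1 ∈ x := (hmem w ⟨x, hx⟩).1 (by rwa [hw])
        have hzw : z = w.1 := by simpa [hw] using ih w.1 hwx w.2
        rwa [hzw]
      · intro hz
        have hzA := hA x hx z hz
        rw [← ih z hz hzA]
        exact (hmem ⟨z, hzA⟩ ⟨x, hx⟩).2 hz
  ext z
  refine ⟨fun hz => hfix z hz ▸ (f ⟨z, hz⟩).2, fun hz => ?_⟩
  obtain ⟨x, hx⟩ := hf ⟨z, hz⟩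
  have hzx : z = x.1 := by simpa [hx] using hfix x.1 x.2
  exact hzx ▸ x.2

end ZFSet

namespace BetaRank

open ZFSet

attribute [local instance] structC

theorem Lv_zero : Lv 0 = ∅ := Ordinal.limitRecOn_zero _ _ _

theorem Lv_add_one (γ : Ord0) : Lv (γ + 1) = defSub (Lv γ) := Ordinal.limitRecOn_add_one _ _ _ _

theorem Lv_of_isSuccLimit {γ : Ord0} (hγ : Order.IsSuccLimit γ) :
    Lv γ = { x | ∃ β, ∃ _ : β < γ, x ∈ Lv β } :=
  Ordinal.limitRecOn_limit _ _ _ _ hγ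

theorem subset_defSub {A : Set ZFS} (hA : IsTransitiveClass A) : A ⊆ defSub A := fun x hx =>
  ⟨hA x hx, 1, Language.adj.formula₂ (Term.var 0) (Term.var 1), ![⟨x, hx⟩],
    fun z => ⟨fun hz => ⟨hA x hx z hz, hz⟩, fun ⟨_, hz⟩ => hz⟩⟩

theorem isTransitiveClass_defSub {A : Set ZFS} (hA : IsTransitiveClass A) :
    IsTransitiveClass (defSub A) := fun _ hx z hz => subset_defSub hA (hx.1 z hz)

theorem isTransitiveClass_Lv (γ : Ord0) : IsTransitiveClass (Lv γ) := by
  induction γ using Ordinal.limitRecOn with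
  | zero => simp [Lv_zero, IsTransitiveClass]
  | add_one γ ih => rw [Lv_add_one]; exact isTransitiveClass_defSub ih
  | limit γ hγ ih =>
    rw [Lv_of_isSuccLimit hγ]
    rintro x ⟨β, hβ, hx⟩ z hz
    exact ⟨β, hβ, ih β hβ x hx z hz⟩

theorem Lv_mono : Monotone Lv := by
  intro γ δ hγδ
  induction δ using Ordinal.limitRecOn with
  | zero => rw [nonpos_iff_eq_zero.1 hγδ]
  | add_one δ ih =>
    rcases hγδ.lt_or_eq with h | rfl
    · rw [Lv_add_one]
      exact (ih (Order.lt_add_one_iff.1 h)).trans (subset_defSub (isTransitiveClass_Lv δ))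
    · rfl
  | limit δ hδ _ =>
    rcases hγδ.lt_or_eq with h | rfl
    · rw [Lv_of_isSuccLimit hδ]
      exact fun x hx => ⟨γ, h, hx⟩
    · rfl

theorem Lv_subset_vonNeumann (γ : Ord0) : Lv γ ⊆ (V_ γ).toSet := by
  induction γ using Ordinal.limitRecOn with
  | zero => simp [Lv_zero]
  | add_one γ ih =>
    rw [Lv_add_one]
    intro x hx
    change x ∈ V_ (γ + 1)
    rw [mem_vonNeumann, Order.lt_add_one_iff, rank_le_iff]
    exact fun y hy => mem_vonNeumann.1 (ih (hx.1 y hy))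
  | limit γ hγ ih =>
    rw [Lv_of_isSuccLimit hγ]
    rintro x ⟨β, hβ, hx⟩
    exact vonNeumann_subset_of_le hβ.le (ih β hβ hx)

noncomputable def Lset (γ : Ord0) : ZFS := (V_ γ).sep (· ∈ Lv γ)

theorem mem_Lset {γ : Ord0} {z : ZFS} : z ∈ Lset γ ↔ z ∈ Lv γ := by
  rw [Lset, mem_sep, and_iff_right_iff_imp]
  exact fun h => Lv_subset_vonNeumann γ h

theorem Lset_mem_Lv_add_one (γ : Ord0) : Lset γ ∈ Lv (γ + 1) := by
  rw [Lv_add_one]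
  exact ⟨fun z hz => mem_Lset.1 hz, 0, ⊤, ![],
    fun z => ⟨fun hz => ⟨mem_Lset.1 hz, id⟩, fun ⟨hz, _⟩ => mem_Lset.2 hz⟩⟩

theorem Lv_strictMono : StrictMono Lv := by
  intro γ δ h
  rw [Set.ssubset_iff_of_subset (Lv_mono h.le)]
  exact ⟨Lset γ, Lv_mono (Order.add_one_le_of_lt h) (Lset_mem_Lv_add_one γ),
    fun hγ => mem_irrefl _ (mem_Lset.2 hγ)⟩

/-- if `α ≠ β` and both `L_α` and `L_β` are pointwise definable, then
`Th(L_α) ≠ Th(L_β)`. -/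
theorem theories_distinct_of_pointwiseDefinable (α β : Ord0) (hne : α ≠ β)
    (hα : PointwiseDefinable (Lv α)) (hβ : PointwiseDefinable (Lv β)) :
    ThC (Lv α) ≠ ThC (Lv β) := by
  intro hTh
  obtain ⟨f⟩ := IsPointwiseDefinable.nonempty_elementaryEmbedding (L := Language.graph) hα hTh
  have hf := IsPointwiseDefinable.surjective_elementaryEmbedding (L := Language.graph) hβ f
  have hLv : Lv α = Lv β := eq_of_surjective_of_mem_iff (isTransitiveClass_Lv α)
    (isTransitiveClass_Lv β) f hf fun x y => f.map_rel Language.adj ![x, y]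
  exact hne (Lv_strictMono.injective hLv)

end BetaRank
end
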